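/- arXiv:2411.08218 — 10 statements merged into one kernel-verified Lean document; each statement's English description precedes it below -/
import Mathlib

section
/- Let a and b be real numbers with 0 ≤ a ≤ b. Then a·Pois(b) is dominated by b·Pois(a) in the convex order; that is, for every convex function f : ℝ → ℝ for which both series converge absolutely, ∑_{n=0}^∞ e^{−b} b^n/n! · f(a·n) ≤ ∑_{n=0}^∞ e^{−a} a^n/n! · f(b·n). -/
/-!
Thin a Poisson(b) count `N` by keeping each point independently with probability `p = a / b`.
Given `N = n` the kept count `K` is Binomial(n, p) with mean `n p`, so Jensen gives
`f (a n) ≤ E[f (b K) | N = n]`. Unconditionally, `K` and `N - K` are independent Poisson(a) and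
Poisson(b - a) counts; this is the identity
`Pois(p b)(k) · Pois((1 - p) b)(l) = Pois(b)(k + l) · Bin(k + l, p)(k)`,
and it turns the averaged inequality into a Cauchy product whose second factor sums to `1`.
-/

open Finset Finset.Nat Polynomial

noncomputable def poissonWeight (r : ℝ) (n : ℕ) : ℝ := Real.exp (-r) * r ^ n / n.factorial

lemma hasSum_poissonWeight (r : ℝ) : HasSum (poissonWeight r) 1 := by
  have h := (NormedSpace.expSeries_div_hasSum_exp r).mul_left (Real.exp (-r))
  rw [← Real.exp_eq_exp_ℝ, ← Real.exp_add, neg_add_cancel, Real.exp_zero] at h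
  unfold poissonWeight
  simpa only [mul_div_assoc] using h

lemma poissonWeight_nonneg {r : ℝ} (hr : 0 ≤ r) (n : ℕ) : 0 ≤ poissonWeight r n := by
  unfold poissonWeight; positivity

lemma poissonWeight_mul_poissonWeight (p r : ℝ) (k l : ℕ) :
    poissonWeight (p * r) k * poissonWeight ((1 - p) * r) l
      = poissonWeight r (k + l) * (bernsteinPolynomial ℝ (k + l) k).eval p := by
  have hexp : Real.exp (-(p * r)) * Real.exp (-((1 - p) * r)) = Real.exp (-r) := by
    rw [← Real.exp_add]; congr 1; ring
  simp only [poissonWeight, bernsteinPolynomial, eval_mul, eval_pow, eval_sub, eval_one, eval_X,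
    eval_natCast, Nat.add_sub_cancel_left, Nat.cast_add_choose, mul_pow, ← hexp]
  field_simp
  ring

lemma ConvexOn.map_mul_le_sum_bernsteinPolynomial {f : ℝ → ℝ} (hf : ConvexOn ℝ Set.univ f)
    {p : ℝ} (hp₀ : 0 ≤ p) (hp₁ : p ≤ 1) (x : ℝ) (n : ℕ) :
    f (n * p * x) ≤ ∑ k ∈ range (n + 1), (bernsteinPolynomial ℝ n k).eval p * f (k * x) := by
  have hw₀ : ∀ k ∈ range (n + 1), 0 ≤ (bernsteinPolynomial ℝ n k).eval p := fun k _ => by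
    simp only [bernsteinPolynomial, eval_mul, eval_pow, eval_sub, eval_one, eval_X, eval_natCast]
    have : 0 ≤ 1 - p := by linarith
    positivity
  have hw₁ : ∑ k ∈ range (n + 1), (bernsteinPolynomial ℝ n k).eval p = 1 := by
    simpa [eval_finsetSum] using congr_arg (eval p) (bernsteinPolynomial.sum ℝ n)
  have hmean : ∑ k ∈ range (n + 1), (bernsteinPolynomial ℝ n k).eval p * ((k : ℝ) * x)
      = n * p * x := by
    have := congr_arg (eval p) (bernsteinPolynomial.sum_smul ℝ n)
    simp only [eval_finsetSum, nsmul_eq_mul, eval_mul, eval_natCast, eval_X] at this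
    calc ∑ k ∈ range (n + 1), (bernsteinPolynomial ℝ n k).eval p * ((k : ℝ) * x)
        = (∑ k ∈ range (n + 1), (k : ℝ) * (bernsteinPolynomial ℝ n k).eval p) * x := by
          rw [Finset.sum_mul]; congr! 1 with k; ring
      _ = n * p * x := by rw [this]
  have := hf.map_sum_le hw₀ hw₁ (fun k _ => Set.mem_univ ((k : ℝ) * x))
  simpa only [smul_eq_mul, hmean] using this

lemma ConvexOn.poissonWeight_mul_map_le_sum_antidiagonal {f : ℝ → ℝ}
    (hf : ConvexOn ℝ Set.univ f) {a b : ℝ} (ha : 0 ≤ a) (hab : a ≤ b) (n : ℕ) :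
    poissonWeight b n * f (a * n)
      ≤ ∑ kl ∈ antidiagonal n, poissonWeight a kl.1 * f (b * kl.1) * poissonWeight (b - a) kl.2 := by
  -- For `b = 0` the junk value `p = 0` still works, since then `a = 0` too.
  set p := a / b
  have hb : 0 ≤ b := ha.trans hab
  have hpb : p * b = a := div_mul_cancel_of_imp fun hb₀ => le_antisymm (hb₀ ▸ hab) ha
  have hqb : (1 - p) * b = b - a := by rw [sub_mul, one_mul, hpb]
  calc poissonWeight b n * f (a * n) = poissonWeight b n * f (n * p * b) := by
        rw [mul_assoc, hpb, mul_comm (n : ℝ) a]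
    _ ≤ poissonWeight b n * ∑ k ∈ range (n + 1), (bernsteinPolynomial ℝ n k).eval p * f (k * b) :=
        mul_le_mul_of_nonneg_left
          (hf.map_mul_le_sum_bernsteinPolynomial (div_nonneg ha hb) (div_le_one_of_le₀ hab hb) b n)
          (poissonWeight_nonneg hb n)
    _ = ∑ kl ∈ antidiagonal n, poissonWeight b n * (bernsteinPolynomial ℝ n kl.1).eval p
          * f (b * kl.1) := by
        simp only [sum_antidiagonal_eq_sum_range_succ_mk, mul_sum, mul_assoc, mul_comm b]
    _ = _ := by
        refine sum_congr rfl fun ⟨k, l⟩ hkl => ?_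
        obtain rfl : k + l = n := mem_antidiagonal.1 hkl
        rw [← hqb, ← hpb, mul_right_comm _ (f _), poissonWeight_mul_poissonWeight]

/-- For `0 ≤ a ≤ b`, `a · Pois(b)` is dominated by `b · Pois(a)` in the convex order:
for every convex `f : ℝ → ℝ` for which both series converge absolutely,
`∑ e^{-b} bⁿ/n! · f(a·n) ≤ ∑ e^{-a} aⁿ/n! · f(b·n)`. -/
theorem stmt_0 (a b : ℝ) (ha : 0 ≤ a) (hab : a ≤ b)
    (f : ℝ → ℝ) (hf : ConvexOn ℝ Set.univ f)
    (h1 : Summable (fun n : ℕ => |Real.exp (-b) * b ^ n / n.factorial * f (a * n)|))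
    (h2 : Summable (fun n : ℕ => |Real.exp (-a) * a ^ n / n.factorial * f (b * n)|)) :
    ∑' n : ℕ, Real.exp (-b) * b ^ n / n.factorial * f (a * n)
      ≤ ∑' n : ℕ, Real.exp (-a) * a ^ n / n.factorial * f (b * n) := by
  have hF : Summable fun k => ‖poissonWeight a k * f (b * k)‖ := h2
  have hP : Summable fun l => ‖poissonWeight (b - a) l‖ := by
    simpa only [Real.norm_of_nonneg (poissonWeight_nonneg (sub_nonneg.2 hab) _)]
      using (hasSum_poissonWeight (b - a)).summable
  calc ∑' n : ℕ, poissonWeight b n * f (a * n)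
      ≤ ∑' n, ∑ kl ∈ antidiagonal n, poissonWeight a kl.1 * f (b * kl.1)
          * poissonWeight (b - a) kl.2 :=
        h1.of_abs.tsum_le_tsum (hf.poissonWeight_mul_map_le_sum_antidiagonal ha hab)
          (summable_norm_sum_mul_antidiagonal_of_summable_norm hF hP).of_norm
    _ = (∑' k, poissonWeight a k * f (b * k)) * ∑' l, poissonWeight (b - a) l :=
        (tsum_mul_tsum_eq_tsum_sum_antidiagonal_of_summable_norm hF hP).symm
    _ = ∑' k, poissonWeight a k * f (b * k) := by
        rw [(hasSum_poissonWeight _).tsum_eq, mul_one]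
end

section
/- Let I be a finite set, let m : I → ℝ with m_i ≥ 0 for all i, let p : I → ℝ with 0 ≤ p_i ≤ 1 for all i, and let (N_i)_{i∈I} be mutually independent random variables with N_i distributed as Pois(m_i). Let M be distributed as Pois(∑_{i∈I} p_i m_i). Then ∑_{i∈I} p_i N_i is dominated by M in the convex order: for every convex function f : ℝ → ℝ for which both expectations are well-defined, E[f(∑_{i∈I} p_i N_i)] ≤ E[f(M)]. -/
/-!
Poisson thinning. Given `N = x`, let `K i ~ Bin(x i, p i)` be independent. Then
`E[∑ i, K i | N] = ∑ i, p i * N i`, so Jensen's inequality gives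
`f (∑ i, p i * N i) ≤ E[f (∑ i, K i) | N]`. Unconditionally, the binomial thinning of a
`Pois(m i)` variable is `Pois(p i * m i)`, independently in `i`, so `∑ i, K i` is Poisson with
rate `∑ i, p i * m i`, which is the law of `M`.
-/

open MeasureTheory ProbabilityTheory

namespace ProbabilityTheory

open scoped NNReal _root_.unitInterval Nat

lemma poissonMeasure_zero : Po(0) = Measure.dirac 0 := by
  refine Measure.ext_of_singleton fun n => ?_
  rw [poissonMeasure_singleton]
  rcases n with _ | n <;> simp [Set.indicator]

lemma hasLaw_poissonMeasure_of_measure_eq {Ω : Type*} [MeasurableSpace Ω] {P : Measure Ω}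
    {X : Ω → ℕ} (hX : Measurable X) {r : ℝ≥0}
    (hmass : ∀ n, P {ω | X ω = n} = ENNReal.ofReal (Real.exp (-r) * r ^ n / n !)) :
    HasLaw X Po(r) P :=
  ⟨hX.aemeasurable, Measure.ext_of_singleton fun n => by
    rw [Measure.map_apply hX (measurableSet_singleton n), poissonMeasure_singleton]
    exact hmass n⟩

lemma iIndepFun.hasLaw_sum_poissonMeasure {Ω : Type*} [MeasurableSpace Ω] {P : Measure Ω}
    [IsProbabilityMeasure P] {ι : Type*} {X : ι → Ω → ℕ} {r : ι → ℝ≥0}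
    (hX : ∀ i, Measurable (X i)) (hindep : iIndepFun X P) (hlaw : ∀ i, HasLaw (X i) Po(r i) P)
    (s : Finset ι) :
    HasLaw (∑ i ∈ s, X i) Po(∑ i ∈ s, r i) P := by
  classical
  induction s using Finset.induction_on with
  | empty =>
    rw [Finset.sum_empty, Finset.sum_empty, poissonMeasure_zero]
    exact ⟨aemeasurable_const, by rw [Pi.zero_def, Measure.map_const, measure_univ, one_smul]⟩
  | insert j s hj ih =>
    rw [Finset.sum_insert hj, Finset.sum_insert hj, add_comm (X j), add_comm (r j)]
    exact (hindep.indepFun_finsetSum_of_notMem hX hj).hasLaw_add_poissonMeasure ih (hlaw j)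

lemma integral_binomial_natCast (n : ℕ) (p : I) : ∫ k, (k : ℝ) ∂Bin(n, p) = p * n := by
  rw [integral_binomial, ← Nat.range_succ_eq_Iic]
  simp only [smul_eq_mul]
  cases n with
  | zero => simp
  | succ m =>
    have hstep (j : ℕ) : ((m + 1).choose (j + 1) * (p : ℝ) ^ (j + 1) * (1 - p) ^ (m + 1 - (j + 1)))
        * ((j + 1 : ℕ) : ℝ) = p * (m + 1) * ((p : ℝ) ^ j * (1 - p) ^ (m - j) * m.choose j) := by
      have := congrArg (Nat.cast (R := ℝ)) (Nat.add_one_mul_choose_eq m j)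
      push_cast at this ⊢
      linear_combination (p : ℝ) ^ (j + 1) * (1 - p) ^ (m - j) * this.symm
    rw [Finset.sum_range_succ', Finset.sum_congr rfl fun j _ => hstep j, ← Finset.mul_sum,
      ← add_pow]
    simp

lemma hasSum_poissonMeasure_mul_binomial (r : ℝ≥0) (p : I) (k : ℕ) :
    HasSum (fun n => Po(r).real {n} * Bin(n, p).real {k})
      (Po(unitInterval.toNNReal p * r).real {k}) := by
  simp only [poissonMeasure_real_singleton, binomial_real_singleton]
  have hvanish : ∀ n ∈ Finset.range k, Real.exp (-r) * r ^ n / n ! *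
      (n.choose k * (p : ℝ) ^ k * (1 - p) ^ (n - k)) = 0 := fun n hn => by
    simp [Nat.choose_eq_zero_of_lt (Finset.mem_range.mp hn)]
  rw [← hasSum_nat_add_iff' k, Finset.sum_eq_zero hvanish, sub_zero]
  have hshift (n : ℕ) : Real.exp (-r) * r ^ (n + k) / (n + k)! *
      ((n + k).choose k * (p : ℝ) ^ k * (1 - p) ^ (n + k - k)) =
      Real.exp (-r) * (p * r) ^ k / k ! * ((r * (1 - p)) ^ n / n !) := by
    rw [Nat.cast_choose ℝ (Nat.le_add_left k n), Nat.add_sub_cancel, mul_pow, mul_pow]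
    field_simp
    ring
  simp_rw [hshift]
  have hexp : HasSum (fun n => (r * (1 - p) : ℝ) ^ n / n !) (Real.exp (r * (1 - p))) :=
    Real.exp_eq_exp_ℝ ▸ NormedSpace.expSeries_div_hasSum_exp _
  have hmass : Real.exp (-(unitInterval.toNNReal p * r : ℝ≥0)) *
      (unitInterval.toNNReal p * r : ℝ≥0) ^ k / k ! =
      Real.exp (-r) * (p * r) ^ k / k ! * Real.exp (r * (1 - p)) := by
    rw [NNReal.coe_mul, unitInterval.coe_toNNReal, mul_comm (_ / _), ← mul_div_assoc,
      ← mul_assoc, ← Real.exp_add]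
    ring_nf
  rw [hmass]
  exact hexp.mul_left _

lemma integral_binomial_real_singleton_poissonMeasure (r : ℝ≥0) (p : I) (k : ℕ) :
    ∫ n, Bin(n, p).real {k} ∂Po(r) = Po(unitInterval.toNNReal p * r).real {k} := by
  rw [integral_poissonMeasure, ← (hasSum_poissonMeasure_mul_binomial r p k).tsum_eq]
  simp_rw [poissonMeasure_real_singleton, smul_eq_mul]

variable {ι : Type*} [Fintype ι]

noncomputable def thinning (p : ι → I) : Kernel (ι → ℕ) (ι → ℕ) where
  toFun x := Measure.pi fun i => Bin(x i, p i)
  measurable' := .of_discrete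

lemma thinning_apply (p : ι → I) (x : ι → ℕ) :
    thinning p x = Measure.pi fun i => Bin(x i, p i) := rfl

instance (p : ι → I) : IsMarkovKernel (thinning p) :=
  ⟨fun x => by rw [thinning_apply]; infer_instance⟩

lemma thinning_comp_pi_poissonMeasure (p : ι → I) (r : ι → ℝ≥0) :
    thinning p ∘ₘ Measure.pi (fun i => Po(r i)) =
      Measure.pi fun i => Po(unitInterval.toNNReal (p i) * r i) := by
  refine Measure.ext_of_measureReal_singleton fun y => ?_
  rw [measureReal_def, Measure.bind_apply (measurableSet_singleton y) (Kernel.aemeasurable _),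
    ← integral_toReal Measurable.of_discrete.aemeasurable
      (.of_forall fun _ => measure_lt_top _ _)]
  simp_rw [measureReal_def, thinning_apply, Measure.pi_singleton, ENNReal.toReal_prod,
    ← measureReal_def]
  rw [integral_fintype_prod_eq_prod (fun i n => Bin(n, p i).real {y i})]
  simp_rw [integral_binomial_real_singleton_poissonMeasure]

lemma integral_sum_thinning (p : ι → I) (x : ι → ℕ) :
    ∫ y, ∑ i, (y i : ℝ) ∂thinning p x = ∑ i, (p i : ℝ) * x i := by
  rw [thinning_apply, integral_finsetSum _ fun i _ => integrable_comp_eval (integrable_binomial _)]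
  simp_rw [integral_comp_eval Measurable.of_discrete.aestronglyMeasurable,
    integral_binomial_natCast]

lemma map_sum_pi_poissonMeasure (r : ι → ℝ≥0) :
    (Measure.pi fun i => Po(r i)).map (fun y => ∑ i, y i) = Po(∑ i, r i) := by
  have hcoord := iIndepFun.hasLaw_sum_poissonMeasure (X := fun i (y : ι → ℕ) => y i) (r := r)
    (fun i => measurable_pi_apply i) (iIndepFun_pi (X := fun _ => id) fun _ => aemeasurable_id)
    (fun i => ⟨(measurable_pi_apply i).aemeasurable, (measurePreserving_eval _ i).map_eq⟩)
    Finset.univ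
  rw [← hcoord.map_eq, Finset.sum_fn]

theorem integral_convexOn_sum_mul_pi_poissonMeasure_le (p : ι → I) (r : ι → ℝ≥0) {f : ℝ → ℝ}
    (hf : ConvexOn ℝ Set.univ f)
    (hleft : Integrable (fun x : ι → ℕ => f (∑ i, p i * x i)) (Measure.pi fun i => Po(r i)))
    (hright : Integrable (fun k : ℕ => f k) Po(∑ i, unitInterval.toNNReal (p i) * r i)) :
    ∫ x, f (∑ i, p i * x i) ∂(Measure.pi fun i => Po(r i)) ≤
      ∫ k, f k ∂Po(∑ i, unitInterval.toNNReal (p i) * r i) := by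
  set ν := Measure.pi fun i => Po(r i)
  set F : (ι → ℕ) → ℝ := fun y => f (∑ i, (y i : ℝ))
  have hlaw : (thinning p ∘ₘ ν).map (fun y => ∑ i, y i) =
      Po(∑ i, unitInterval.toNNReal (p i) * r i) := by
    rw [thinning_comp_pi_poissonMeasure, map_sum_pi_poissonMeasure]
  have hF : Integrable F (thinning p ∘ₘ ν) := by
    rw [← hlaw, integrable_map_measure .of_discrete .of_discrete] at hright
    simpa [F, Function.comp_def] using hright
  rw [Measure.comp_eq_comp_const_apply] at hF
  have hjensen : ∀ᵐ x ∂ν, f (∑ i, p i * x i) ≤ ∫ y, F y ∂thinning p x := by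
    filter_upwards [hF.ae_of_comp] with x hx
    rw [← integral_sum_thinning]
    exact hf.map_integral_le (hf.continuousOn isOpen_univ) isClosed_univ
      (.of_forall fun _ => trivial)
      (integrable_finsetSum _ fun i _ => integrable_comp_eval (integrable_binomial _)) hx
  calc ∫ x, f (∑ i, p i * x i) ∂ν ≤ ∫ x, ∫ y, F y ∂thinning p x ∂ν :=
        integral_mono_ae hleft (by simpa using hF.integral_comp) hjensen
    _ = ∫ y, F y ∂(thinning p ∘ₘ ν) := by
        rw [Measure.comp_eq_comp_const_apply, Kernel.integral_comp hF]
        simp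
    _ = ∫ k, f k ∂Po(∑ i, unitInterval.toNNReal (p i) * r i) := by
        rw [← hlaw, integral_map .of_discrete .of_discrete]
        simp [F]

end ProbabilityTheory

/-- If `(N i)` are mutually independent with `N i ~ Pois(m i)` and
`M ~ Pois(∑ p i · m i)` with `0 ≤ p i ≤ 1` and `m i ≥ 0`, then `∑ p i · N i` is
dominated by `M` in the convex order. -/
theorem stmt_1 {Ω : Type*} [MeasurableSpace Ω] (μ : Measure Ω) [IsProbabilityMeasure μ]
    {I : Type*} [Fintype I]
    (m p : I → ℝ) (hm : ∀ i, 0 ≤ m i) (hp : ∀ i, 0 ≤ p i ∧ p i ≤ 1)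
    (N : I → Ω → ℕ) (hNmeas : ∀ i, Measurable (N i))
    (hindep : iIndepFun N μ)
    (hNdist : ∀ i n, μ {ω | N i ω = n} =
      ENNReal.ofReal (Real.exp (-(m i)) * (m i) ^ n / n.factorial))
    (M : Ω → ℕ) (hMmeas : Measurable M)
    (hMdist : ∀ n, μ {ω | M ω = n} =
      ENNReal.ofReal (Real.exp (-(∑ i, p i * m i)) * (∑ i, p i * m i) ^ n / n.factorial))
    (f : ℝ → ℝ) (hf : ConvexOn ℝ Set.univ f)
    (hint1 : Integrable (fun ω => f (∑ i, p i * (N i ω))) μ)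
    (hint2 : Integrable (fun ω => f (M ω)) μ) :
    ∫ ω, f (∑ i, p i * (N i ω)) ∂μ ≤ ∫ ω, f (M ω) ∂μ := by
  let r : I → NNReal := fun i => ⟨m i, hm i⟩
  let q : I → unitInterval := fun i => ⟨p i, hp i⟩
  have hlawN : HasLaw (fun ω i => N i ω) (Measure.pi fun i => Po(r i)) μ := by
    refine ⟨(measurable_pi_lambda _ hNmeas).aemeasurable, ?_⟩
    rw [(iIndepFun_iff_map_fun_eq_pi_map fun i => (hNmeas i).aemeasurable).1 hindep]
    exact congrArg Measure.pi (funext fun i =>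
      (hasLaw_poissonMeasure_of_measure_eq (hNmeas i) (hNdist i)).map_eq)
  have hrate : ((∑ i, unitInterval.toNNReal (q i) * r i : NNReal) : ℝ) = ∑ i, p i * m i := by
    push_cast
    rfl
  have hlawM : HasLaw M Po(∑ i, unitInterval.toNNReal (q i) * r i) μ :=
    hasLaw_poissonMeasure_of_measure_eq hMmeas (by rw [hrate]; exact hMdist)
  have hleft := hlawN.integral_comp (f := fun x : I → ℕ => f (∑ i, q i * x i))
    Measurable.of_discrete.aestronglyMeasurable
  have hright := hlawM.integral_comp (f := fun k : ℕ => f k)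
    Measurable.of_discrete.aestronglyMeasurable
  simp only [Function.comp_def] at hleft hright
  rw [hleft, hright]
  refine integral_convexOn_sum_mul_pi_poissonMeasure_le q r hf ?_ ?_
  · rw [← hlawN.map_eq, integrable_map_measure .of_discrete hlawN.aemeasurable]
    exact hint1
  · rw [← hlawM.map_eq, integrable_map_measure .of_discrete hlawM.aemeasurable]
    exact hint2
end

section
/- Let I be a finite set and let c, u : I → ℝ satisfy c_i ≥ 0 and u_i ≥ 0 for all i ∈ I. Then the following two conditions are equivalent: (a) for every subset H ⊆ I, ∑_{i∈H} c_i u_i ≤ 1 − exp(−∑_{i∈H} u_i); (b) for every θ : I → ℝ with 0 ≤ θ_i ≤ u_i for all i ∈ I, ∑_{i∈I} c_i θ_i ≤ 1 − exp(−∑_{i∈I} θ_i). -/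
/-!
The map `θ ↦ ∑ cᵢ θᵢ + exp (-∑ θᵢ)` is convex, and the box `∏ [0, uᵢ]` is the convex hull of
its vertices `H.piecewise u 0`. By the maximum principle for convex functions the bound on the
box follows from the bound at the vertices, which is the family of subset constraints.
-/

open Finset

theorem ConvexOn.exists_ge_piecewise {𝕜 ι : Type*} [Field 𝕜] [LinearOrder 𝕜]
    [IsStrictOrderedRing 𝕜] [Fintype ι] [DecidableEq ι] {f : (ι → 𝕜) → 𝕜} {a b x : ι → 𝕜}
    (hf : ConvexOn 𝕜 (Set.Icc a b) f) (hx : x ∈ Set.Icc a b) :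
    ∃ H : Finset ι, f x ≤ f (H.piecewise b a) := by
  have hab : a ≤ b := hx.1.trans hx.2
  have hvertices : convexHull 𝕜 (Set.univ.pi fun i ↦ {a i, b i}) = Set.Icc a b := by
    simp only [convexHull_pi, convexHull_pair, segment_eq_Icc (hab _), Set.pi_univ_Icc]
  obtain ⟨y, hy, hxy⟩ := hf.exists_ge_of_mem_convexHull
    (hvertices ▸ subset_convexHull 𝕜 _) (hvertices ▸ hx)
  refine ⟨univ.filter fun i ↦ y i = b i, hxy.trans_eq (congrArg f (funext fun i ↦ ?_))⟩
  rcases hy i (Set.mem_univ i) with h | h <;> by_cases hb : y i = b i <;> simp_all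

theorem convexOn_sum_mul_add_exp_neg_sum {I : Type*} [Fintype I] (c : I → ℝ) :
    ConvexOn ℝ Set.univ (fun θ : I → ℝ ↦ ∑ i, c i * θ i + Real.exp (-∑ i, θ i)) := by
  have hlinear := (∑ i, c i • LinearMap.proj i : (I → ℝ) →ₗ[ℝ] ℝ).convexOn convex_univ
  have hexp := convexOn_exp.comp_linearMap (-∑ i, LinearMap.proj i : (I → ℝ) →ₗ[ℝ] ℝ)
  exact (hlinear.add hexp).congr fun θ _ ↦ by simp

theorem stmt_3_general {I : Type*} [Fintype I] (c u : I → ℝ)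
    (hu : ∀ i, 0 ≤ u i) :
    (∀ H : Finset I, ∑ i ∈ H, c i * u i ≤ 1 - Real.exp (-∑ i ∈ H, u i)) ↔
    (∀ θ : I → ℝ, (∀ i, 0 ≤ θ i ∧ θ i ≤ u i) →
      ∑ i, c i * θ i ≤ 1 - Real.exp (-∑ i, θ i)) := by
  classical
  have hsum (H : Finset I) : ∑ i, H.piecewise u 0 i = ∑ i ∈ H, u i := by
    simp [Finset.piecewise]
  have hweighted_sum (H : Finset I) :
      ∑ i, c i * H.piecewise u 0 i = ∑ i ∈ H, c i * u i := by
    simp [Finset.piecewise, mul_ite]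
  constructor
  · intro hH θ hθ
    obtain ⟨H, hle⟩ := ((convexOn_sum_mul_add_exp_neg_sum c).subset (Set.subset_univ _)
      (convex_Icc 0 u)).exists_ge_piecewise (x := θ) ⟨fun i ↦ (hθ i).1, fun i ↦ (hθ i).2⟩
    rw [hweighted_sum, hsum] at hle
    linarith [hH H]
  · intro hθ H
    have := hθ (H.piecewise u 0) fun i ↦ by by_cases hi : i ∈ H <;> simp [hi, hu i]
    rwa [hweighted_sum, hsum] at this

/-- The exponentially many subset constraints `∑_{i∈H} c_i u_i ≤ 1 − exp(−∑_{i∈H} u_i)`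
are equivalent to the continuous box constraints
`∑ c_i θ_i ≤ 1 − exp(−∑ θ_i)` for all `0 ≤ θ ≤ u`. -/
theorem stmt_3 {I : Type*} [Fintype I] (c u : I → ℝ)
    (hc : ∀ i, 0 ≤ c i) (hu : ∀ i, 0 ≤ u i) :
    (∀ H : Finset I, ∑ i ∈ H, c i * u i ≤ 1 - Real.exp (-∑ i ∈ H, u i)) ↔
    (∀ θ : I → ℝ, (∀ i, 0 ≤ θ i ∧ θ i ≤ u i) →
      ∑ i, c i * θ i ≤ 1 - Real.exp (-∑ i, θ i)) :=
  stmt_3_general c u hu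
end

section
/- Let n ∈ ℕ and let c_1 ≥ c_2 ≥ … ≥ c_n ≥ 0 and u_1, …, u_n ≥ 0 be real numbers. Suppose that for every k ∈ {0, 1, …, n}, ∑_{i=1}^{k} c_i u_i ≤ 1 − exp(−∑_{i=1}^{k} u_i). Then for every subset H ⊆ {1, …, n}, ∑_{i∈H} c_i u_i ≤ 1 − exp(−∑_{i∈H} u_i). -/
/-!
Take a subset `H` maximising the excess `∑_H c_i u_i - (1 - exp (-∑_H u_i))`. Since the secant
slope of `x ↦ exp (-x)` on `[A, A + u]` lies strictly between `exp (-(A + u))` and `exp (-A)`,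
maximality forces `c_i < exp (-∑_H u)` for every `i ∉ H` with `u_i > 0` and `exp (-∑_H u) < c_j`
for every `j ∈ H` with `u_j > 0`. As `c` is nonincreasing, the indices of `H` with `u_i > 0` are
then an initial segment of those of `{1, …, n}`, so `H` has the same excess as a prefix, which is
nonpositive by hypothesis.
-/

open Finset Real

lemma exp_neg_sub_exp_neg_add_lt {a u : ℝ} (hu : 0 < u) :
    exp (-a) - exp (-(a + u)) < exp (-a) * u := by
  have hsplit : exp (-(a + u)) = exp (-a) * exp (-u) := by rw [← exp_add]; ring_nf
  have htangent : -u + 1 < exp (-u) := add_one_lt_exp (neg_ne_zero.2 hu.ne')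
  nlinarith [exp_pos (-a)]

lemma exp_neg_add_mul_lt_exp_neg_sub {a u : ℝ} (hu : 0 < u) :
    exp (-(a + u)) * u < exp (-a) - exp (-(a + u)) := by
  have hsplit : exp (-a) = exp (-(a + u)) * exp u := by rw [← exp_add]; ring_nf
  have htangent : u + 1 < exp u := add_one_lt_exp hu.ne'
  nlinarith [exp_pos (-(a + u))]

section Excess

variable {ι : Type*} (c u : ι → ℝ)

noncomputable def subsetExcess (H : Finset ι) : ℝ :=
  ∑ i ∈ H, c i * u i - (1 - exp (-∑ i ∈ H, u i))

lemma subsetExcess_nonpos_iff (H : Finset ι) :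
    subsetExcess c u H ≤ 0 ↔ ∑ i ∈ H, c i * u i ≤ 1 - exp (-∑ i ∈ H, u i) :=
  sub_nonpos

lemma subsetExcess_filter_ne_zero (H : Finset ι) [DecidablePred fun i => u i ≠ 0] :
    subsetExcess c u (H.filter fun i => u i ≠ 0) = subsetExcess c u H := by
  unfold subsetExcess
  rw [sum_filter_of_ne fun i _ h => right_ne_zero_of_mul h,
    sum_filter_of_ne fun _ _ h => h]

variable [DecidableEq ι] {c u} {H : Finset ι}
  (hmax : ∀ K : Finset ι, subsetExcess c u K ≤ subsetExcess c u H)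
include hmax

lemma lt_exp_neg_of_notMem_of_isMax {i : ι} (hi : i ∉ H) (hui : 0 < u i) :
    c i < exp (-∑ j ∈ H, u j) := by
  have hins := hmax (insert i H)
  unfold subsetExcess at hins
  rw [sum_insert hi, sum_insert hi, add_comm (u i)] at hins
  have hgain : c i * u i < exp (-∑ j ∈ H, u j) * u i := by
    linarith [exp_neg_sub_exp_neg_add_lt (a := ∑ j ∈ H, u j) hui]
  exact lt_of_mul_lt_mul_right hgain hui.le

lemma exp_neg_lt_of_mem_of_isMax {j : ι} (hj : j ∈ H) (huj : 0 < u j) :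
    exp (-∑ i ∈ H, u i) < c j := by
  have hdel := hmax (H.erase j)
  unfold subsetExcess at hdel
  rw [← add_sum_erase H (fun i => c i * u i) hj] at hdel
  rw [← add_sum_erase H u hj, add_comm (u j)] at hdel ⊢
  have hloss : exp (-(∑ i ∈ H.erase j, u i + u j)) * u j < c j * u j := by
    linarith [exp_neg_add_mul_lt_exp_neg_sub (a := ∑ i ∈ H.erase j, u i) huj]
  exact lt_of_mul_lt_mul_right hloss huj.le

lemma mem_of_le_of_mem_of_isMax [LinearOrder ι] (hc : Antitone c) (hu : ∀ i, 0 ≤ u i)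
    {i j : ι} (hij : i ≤ j) (hj : j ∈ H) (huj : u j ≠ 0) (hui : u i ≠ 0) : i ∈ H := by
  by_contra hi
  have := lt_exp_neg_of_notMem_of_isMax hmax hi ((hu i).lt_of_ne' hui)
  have := exp_neg_lt_of_mem_of_isMax hmax hj ((hu j).lt_of_ne' huj)
  linarith [hc hij]

end Excess

lemma exists_prefix_filter_eq {n : ℕ} (p : Fin n → Prop) [DecidablePred p] (S : Finset (Fin n))
    (hSp : ∀ i ∈ S, p i) (hS : ∀ i j, i ≤ j → j ∈ S → p i → i ∈ S) :
    ∃ k ≤ n, ((univ.filter fun i : Fin n => (i : ℕ) < k).filter p) = S := by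
  refine ⟨S.sup fun i => (i : ℕ) + 1, Finset.sup_le fun i _ => i.isLt, ?_⟩
  ext i
  simp only [mem_filter, mem_univ, true_and, Finset.lt_sup_iff]
  constructor
  · rintro ⟨⟨j, hj, hij⟩, hpi⟩
    exact hS i j (Fin.le_def.2 (by omega)) hj hpi
  · intro hi
    exact ⟨⟨i, hi, Nat.lt_succ_self i⟩, hSp i hi⟩

theorem stmt_4_general (n : ℕ) (c u : Fin n → ℝ)
    (hmono : ∀ i j : Fin n, i ≤ j → c j ≤ c i)
    (hu : ∀ i, 0 ≤ u i)
    (hpre : ∀ k : ℕ, k ≤ n →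
      ∑ i ∈ Finset.univ.filter (fun i : Fin n => (i : ℕ) < k), c i * u i ≤
        1 - Real.exp (-∑ i ∈ Finset.univ.filter (fun i : Fin n => (i : ℕ) < k), u i)) :
    ∀ H : Finset (Fin n),
      ∑ i ∈ H, c i * u i ≤ 1 - Real.exp (-∑ i ∈ H, u i) := by
  intro H₀
  obtain ⟨H, -, hmax⟩ := exists_max_image univ (subsetExcess c u) univ_nonempty
  replace hmax : ∀ K, subsetExcess c u K ≤ subsetExcess c u H := fun K => hmax K (mem_univ K)
  obtain ⟨k, hkn, hk⟩ := exists_prefix_filter_eq (fun i => u i ≠ 0) (H.filter fun i => u i ≠ 0)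
    (fun i hi => (mem_filter.1 hi).2) fun i j hij hj hui =>
      mem_filter.2 ⟨mem_of_le_of_mem_of_isMax hmax hmono hu hij (mem_filter.1 hj).1
        (mem_filter.1 hj).2 hui, hui⟩
  rw [← subsetExcess_nonpos_iff]
  calc subsetExcess c u H₀ ≤ subsetExcess c u H := hmax H₀
    _ = subsetExcess c u (univ.filter fun i : Fin n => (i : ℕ) < k) := by
      rw [← subsetExcess_filter_ne_zero c u H, ← hk, subsetExcess_filter_ne_zero]
    _ ≤ 0 := (subsetExcess_nonpos_iff c u _).2 (hpre k hkn)

/-- Prefix sufficiency: if the coefficients `c` are nonincreasing and nonnegative and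
all prefix constraints hold, then all subset constraints hold. -/
theorem stmt_4 (n : ℕ) (c u : Fin n → ℝ)
    (hmono : ∀ i j : Fin n, i ≤ j → c j ≤ c i)
    (hc : ∀ i, 0 ≤ c i) (hu : ∀ i, 0 ≤ u i)
    (hpre : ∀ k : ℕ, k ≤ n →
      ∑ i ∈ Finset.univ.filter (fun i : Fin n => (i : ℕ) < k), c i * u i ≤
        1 - Real.exp (-∑ i ∈ Finset.univ.filter (fun i : Fin n => (i : ℕ) < k), u i)) :
    ∀ H : Finset (Fin n),
      ∑ i ∈ H, c i * u i ≤ 1 - Real.exp (-∑ i ∈ H, u i) :=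
  stmt_4_general n c u hmono hu hpre
end

section
/- For every ε ∈ (0, 0.1) there exists b > 0 such that for all real numbers σ ∈ [1 − ε/2, 1] and σ_S ∈ [0, σ] with σ − σ_S ≤ 1 − ε, the following holds, where m := σ_S/(1 − ε): 1 − e^{−(σ − σ_S)} · (∑_{n=0}^∞ e^{−m} m^n/n! · max(0, 1 − (1 − ε)·n)) ≥ (1 − 1/e + b) · σ. -/
/-!
The Poisson weight `max 0 (1 - (1 - ε) n)` vanishes for `n ≥ 2`, so the series is
`exp (-m) (1 + ε m)`, and since `σS = (1 - ε) m` the whole subtracted term is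
`exp (-σ) g(ε m)` with `g x = (1 + x) exp (-x)`. The constraint `σ - σS ≤ 1 - ε` forces
`σS ≥ ε / 2`, hence `ε m ≥ ε² / 2`, and `g` is decreasing with `g x < 1` for `x > 0`; the gap
`1 - g(ε² / 2)`, weighted by `exp (-σ) ≥ exp (-1)`, is the gain `b` over the concavity bound
`1 - exp (-σ) ≥ (1 - exp (-1)) σ`.
-/

open Real Set

lemma tsum_poisson_mul_max_zero_one_sub_mul {ε : ℝ} (hε0 : 0 ≤ ε) (hε : ε ≤ 1 / 2) (m : ℝ) :
    ∑' n : ℕ, exp (-m) * m ^ n / n.factorial * max 0 (1 - (1 - ε) * n) =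
      exp (-m) * (1 + ε * m) := by
  rw [tsum_eq_sum (s := Finset.range 2)]
  · simp only [Finset.sum_range_succ, Finset.range_one, Finset.sum_singleton, pow_zero, mul_one,
      Nat.factorial_zero, Nat.cast_one, div_one, CharP.cast_eq_zero, mul_zero, sub_zero,
      zero_le_one, sup_of_le_right, pow_one, Nat.factorial_one, sub_sub_cancel, max_eq_right hε0]
    ring
  · intro n hn
    have h2n : (2 : ℝ) ≤ n := by exact_mod_cast (by simp at hn; omega : 2 ≤ n)
    rw [max_eq_left (by nlinarith), mul_zero]

lemma antitoneOn_one_add_mul_exp_neg : AntitoneOn (fun x : ℝ => (1 + x) * exp (-x)) (Ici 0) := by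
  intro x (hx : 0 ≤ x) y _ hxy
  calc (1 + y) * exp (-y) ≤ (1 + x) * exp (y - x) * exp (-y) := by
        gcongr
        nlinarith [mul_le_mul_of_nonneg_left (add_one_le_exp (y - x)) (by linarith : 0 ≤ 1 + x),
          mul_nonneg hx (sub_nonneg.2 hxy)]
    _ = (1 + x) * exp (-x) := by rw [mul_assoc, ← exp_add]; ring_nf

lemma one_add_mul_exp_neg_lt_one {x : ℝ} (hx : 0 < x) : (1 + x) * exp (-x) < 1 := by
  rw [exp_neg, ← div_eq_mul_inv, div_lt_one (exp_pos x)]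
  linarith [add_one_lt_exp hx.ne']

lemma one_sub_exp_neg_one_mul_le {σ : ℝ} (h0 : 0 ≤ σ) (h1 : σ ≤ 1) :
    (1 - exp (-1)) * σ ≤ 1 - exp (-σ) := by
  have h := convexOn_exp.2 (mem_univ (0 : ℝ)) (mem_univ (-1)) (sub_nonneg.2 h1) h0
    (sub_add_cancel 1 σ)
  simp only [smul_eq_mul, mul_zero, zero_add, mul_neg, mul_one, exp_zero] at h
  linarith

lemma one_sub_exp_neg_one_add_mul_le {σ c : ℝ} (h0 : 0 ≤ σ) (h1 : σ ≤ 1) (hc : 0 ≤ c) :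
    (1 - exp (-1) + c * exp (-1)) * σ ≤ 1 - exp (-σ) * (1 - c) := by
  have hexp : exp (-1) ≤ exp (-σ) := exp_le_exp.2 (by linarith)
  nlinarith [one_sub_exp_neg_one_mul_le h0 h1, mul_le_mul_of_nonneg_left hexp hc,
    mul_le_mul_of_nonneg_left h1 (mul_nonneg hc (exp_pos (-1)).le)]

/-- For every `ε ∈ (0, 0.1)` there is `b > 0` such that for all
`σ ∈ [1 − ε/2, 1]`, `σ_S ∈ [0, σ]` with `σ − σ_S ≤ 1 − ε`, writing `m := σ_S/(1−ε)`,
`1 − e^{−(σ−σ_S)} · E[max(0, 1 − (1−ε)·Pois(m))] ≥ (1 − 1/e + b)·σ`. -/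
theorem stmt_5 (ε : ℝ) (hε0 : 0 < ε) (hε1 : ε < 0.1) :
    ∃ b : ℝ, 0 < b ∧
      ∀ σ σS : ℝ, 1 - ε / 2 ≤ σ → σ ≤ 1 → 0 ≤ σS → σS ≤ σ → σ - σS ≤ 1 - ε →
        (1 - 1 / Real.exp 1 + b) * σ ≤
          1 - Real.exp (-(σ - σS)) *
            ∑' n : ℕ, Real.exp (-(σS / (1 - ε))) * (σS / (1 - ε)) ^ n / n.factorial *
              max 0 (1 - (1 - ε) * n) := by
  have hε : ε ≤ 1 / 2 := by norm_num at hε1; linarith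
  set x₀ := ε ^ 2 / 2 with hx₀
  set c := 1 - (1 + x₀) * exp (-x₀)
  have hc : 0 < c := sub_pos.2 (one_add_mul_exp_neg_lt_one (by positivity))
  refine ⟨c * exp (-1), by positivity, fun σ σS hσ hσ1 hσS0 _ hgap => ?_⟩
  set m := σS / (1 - ε)
  have hσS_le_m : σS ≤ m := le_div_self hσS0 (by linarith) (by linarith)
  have hσS_eq : (1 - ε) * m = σS := mul_div_cancel₀ σS (by linarith)
  have hexp : exp (-(σ - σS)) * exp (-m) = exp (-σ) * exp (-(ε * m)) := by
    rw [← exp_add, ← exp_add]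
    congr 1
    linarith
  have hgain : (1 + ε * m) * exp (-(ε * m)) ≤ 1 - c := by
    rw [sub_sub_cancel]
    refine antitoneOn_one_add_mul_exp_neg (by positivity : 0 ≤ x₀)
      (mul_nonneg hε0.le (hσS0.trans hσS_le_m) : 0 ≤ ε * m) ?_
    nlinarith [mul_le_mul_of_nonneg_left hσS_le_m hε0.le]
  rw [tsum_poisson_mul_max_zero_one_sub_mul hε0.le hε, one_div, ← exp_neg, ← mul_assoc, hexp,
    mul_assoc, mul_comm (exp (-(ε * m)))]
  calc (1 - exp (-1) + c * exp (-1)) * σ ≤ 1 - exp (-σ) * (1 - c) :=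
        one_sub_exp_neg_one_add_mul_le (by linarith) hσ1 hc.le
    _ ≤ 1 - exp (-σ) * ((1 + ε * m) * exp (-(ε * m))) := by gcongr
end

section
/- Let I and K be finite sets, let y : I → ℝ satisfy y_i ≥ 0 for all i, let γ : K → ℝ satisfy γ_k ≥ 0 for all k, and assume Γ := ∑_{k∈K} γ_k > 0. For each k ∈ K let N(k) ⊆ I be a subset, and let β and Y be real numbers such that ∑_{i∈N(k)} y_i ≥ β for every k ∈ K and ∑_{i∈I} y_i ≤ Y. Then the set O := { i ∈ I : ∑_{k∈K, i∈N(k)} γ_k ≥ Γ/2 } satisfies ∑_{i∈O} y_i ≥ 2β − Y. -/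
/-!
Write `w i = ∑_{k ∋ i} γ k ≤ Γ` for the weight an element receives. Double counting gives
`Γ β ≤ ∑_k γ_k y(N k) = ∑_i w_i y_i`. Elements of `O` contribute at most `Γ y_i`, the others at
most `(Γ/2) y_i`, so `∑_i w_i y_i ≤ (Γ/2) (y(I) + y(O)) ≤ (Γ/2) (Y + y(O))`; divide by `Γ/2 > 0`.
-/

open Finset

theorem sum_mul_sum_eq_sum_degree_mul {I K : Type*} [Fintype I] [Fintype K] [DecidableEq I]
    (γ : K → ℝ) (N : K → Finset I) (y : I → ℝ) :
    ∑ k, γ k * ∑ i ∈ N k, y i = ∑ i, (∑ k ∈ univ.filter (fun k => i ∈ N k), γ k) * y i := by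
  simp_rw [Finset.sum_filter, Finset.sum_mul, Finset.mul_sum]
  rw [Finset.sum_comm]
  simp_rw [ite_mul, zero_mul, Finset.sum_ite_mem, Finset.univ_inter]

theorem sum_mul_le_mul_sum_add_mul_sum_filter_le {ι : Type*} [Fintype ι]
    {w y : ι → ℝ} (hy : ∀ i, 0 ≤ y i) {Γ t : ℝ} (hw : ∀ i, w i ≤ Γ) :
    ∑ i, w i * y i ≤ t * ∑ i, y i + (Γ - t) * ∑ i ∈ univ.filter (fun i => t ≤ w i), y i := by
  rw [Finset.sum_filter, Finset.mul_sum, Finset.mul_sum, ← Finset.sum_add_distrib]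
  refine Finset.sum_le_sum fun i _ => ?_
  split_ifs with h
  · nlinarith [hw i, hy i]
  · nlinarith [hy i]

open Classical in
/-- Double-counting lemma for the core set: if every neighborhood `N k` carries
`y`-mass at least `β` and the total `y`-mass is at most `Y`, then the set `O` of
elements receiving at least half the total `γ`-weight has `y`-mass at least `2β − Y`. -/
theorem stmt_7 {I K : Type*} [Fintype I] [Fintype K]
    (y : I → ℝ) (hy : ∀ i, 0 ≤ y i)
    (γ : K → ℝ) (hγ : ∀ k, 0 ≤ γ k) (hΓ : 0 < ∑ k, γ k)
    (N : K → Finset I) (β Y : ℝ)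
    (hβ : ∀ k, β ≤ ∑ i ∈ N k, y i)
    (hY : ∑ i, y i ≤ Y) :
    2 * β - Y ≤
      ∑ i ∈ Finset.univ.filter
          (fun i : I =>
            (∑ k, γ k) / 2 ≤ ∑ k ∈ Finset.univ.filter (fun k : K => i ∈ N k), γ k),
        y i := by
  set Γ := ∑ k, γ k
  set w : I → ℝ := fun i => ∑ k ∈ univ.filter (fun k => i ∈ N k), γ k
  set S := ∑ i ∈ univ.filter (fun i => Γ / 2 ≤ w i), y i
  have hcount : Γ * β ≤ ∑ i, w i * y i :=
    calc Γ * β = ∑ k, γ k * β := Finset.sum_mul _ _ _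
      _ ≤ ∑ k, γ k * ∑ i ∈ N k, y i := by gcongr with k; exacts [hγ k, hβ k]
      _ = ∑ i, w i * y i := sum_mul_sum_eq_sum_degree_mul γ N y
  have hw : ∀ i, w i ≤ Γ := fun i =>
    Finset.sum_le_sum_of_subset_of_nonneg (Finset.filter_subset _ _) fun k _ _ => hγ k
  have hsplit : ∑ i, w i * y i ≤ Γ / 2 * ∑ i, y i + (Γ - Γ / 2) * S :=
    sum_mul_le_mul_sum_add_mul_sum_filter_le hy hw
  have : Γ / 2 * (2 * β) ≤ Γ / 2 * (Y + S) := by nlinarith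
  linarith [le_of_mul_le_mul_left this (half_pos hΓ)]
end

section
/- Let ε, η, δ, c ∈ (0, 1), let μ > 0, let λ satisfy 0 < λ ≤ ε²μ, and let Γ ≥ η·μ. Set r := μ + λ, τ* := 1/(δΓ), c'' := c · exp(−(1 + η + ε²)/(δη)), and c̃ := c''η/(2 + (1 − c'')η). Then ∫₀^∞ r e^{−r t} · exp(−(1 − c·𝟙[t ≥ τ*])·t·Γ) dt ≥ (1 + c̃) · r/(r + Γ). -/
/-!
Before `τ*` the integrand is `r e^{-A t}` and afterwards `r e^{-B t}`, with `A = r + Γ` and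
`B = r + (1 - c)Γ`, so the integral equals `r((1 - e^{-Aτ*})/A + e^{-Bτ*}/B)`.
Since `B ≤ A` this is at least `r/A + r e^{-Aτ*}(A - B)/(AB)`, and the excess over `r/A` is
at least `c̃ · r/A` because `Aτ* ≤ (1 + η + ε²)/(δη)` gives `c'' ≤ c e^{-Aτ*}`, while
`ηB ≤ Γ(2 + (1 - c'')η)`.
-/

open MeasureTheory Set Real

lemma integrableOn_Ici_exp_neg_mul {a : ℝ} (ha : 0 < a) (s : ℝ) :
    IntegrableOn (fun t => exp (-a * t)) (Ici s) :=
  (integrableOn_Ici_iff_integrableOn_Ioi).mpr (exp_neg_integrableOn_Ioi s ha)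

lemma integral_Ici_exp_neg_mul {a : ℝ} (ha : 0 < a) (s : ℝ) :
    ∫ t in Ici s, exp (-a * t) = exp (-a * s) / a := by
  rw [integral_Ici_eq_integral_Ioi, integral_exp_mul_Ioi (neg_lt_zero.mpr ha), neg_div_neg_eq]

lemma integral_Ici_ite_exp_neg_mul {a b τ : ℝ} (ha : 0 < a) (hb : 0 < b) (hτ : 0 ≤ τ) :
    ∫ t in Ici 0, (if τ ≤ t then exp (-b * t) else exp (-a * t)) =
      (1 - exp (-a * τ)) / a + exp (-b * τ) / b := by
  have hsplit : (fun t => if τ ≤ t then exp (-b * t) else exp (-a * t)) =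
      fun t => exp (-a * t) + (Ici τ).indicator (fun t => exp (-b * t) - exp (-a * t)) t := by
    ext t
    by_cases h : τ ≤ t <;> simp [h]
  have hjump : ∫ t in Ici 0, (Ici τ).indicator (fun t => exp (-b * t) - exp (-a * t)) t =
      exp (-b * τ) / b - exp (-a * τ) / a := by
    rw [setIntegral_indicator measurableSet_Ici, Ici_inter_Ici, max_eq_right hτ,
      integral_sub (integrableOn_Ici_exp_neg_mul hb τ) (integrableOn_Ici_exp_neg_mul ha τ),
      integral_Ici_exp_neg_mul hb, integral_Ici_exp_neg_mul ha]
  have hjump_int : IntegrableOn ((Ici τ).indicator fun t => exp (-b * t) - exp (-a * t)) (Ici 0) :=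
    ((integrableOn_Ici_exp_neg_mul hb τ).sub
      (integrableOn_Ici_exp_neg_mul ha τ)).integrable_indicator measurableSet_Ici |>.integrableOn
  rw [hsplit, integral_add (integrableOn_Ici_exp_neg_mul ha 0) hjump_int, hjump,
    integral_Ici_exp_neg_mul ha, mul_zero, exp_zero]
  ring

lemma one_add_mul_div_le_of_rate_drop {r a b X Y k : ℝ} (hr : 0 ≤ r) (hb : 0 < b)
    (hba : b ≤ a) (hXY : X ≤ Y) (hk : k * b ≤ (a - b) * X) :
    (1 + k) * (r / a) ≤ r * ((1 - X) / a + Y / b) := by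
  have ha : 0 < a := hb.trans_le hba
  have key : (1 + k) / a ≤ (1 - X) / a + Y / b := by
    rw [div_add_div _ _ ha.ne' hb.ne', div_le_div_iff₀ ha (mul_pos ha hb)]
    nlinarith [mul_le_mul_of_nonneg_left hXY ha.le]
  calc (1 + k) * (r / a) = r * ((1 + k) / a) := by ring
    _ ≤ r * ((1 - X) / a + Y / b) := mul_le_mul_of_nonneg_left key hr

lemma add_mul_one_div_mul_le {ε η δ μ r Γ : ℝ} (hη : 0 < η) (hδ : 0 < δ) (hμ : 0 < μ)
    (hr : r ≤ (1 + ε ^ 2) * μ) (hΓ : η * μ ≤ Γ) :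
    (r + Γ) * (1 / (δ * Γ)) ≤ (1 + η + ε ^ 2) / (δ * η) := by
  have hΓ0 : 0 < Γ := (mul_pos hη hμ).trans_le hΓ
  have hηr : η * r ≤ (1 + ε ^ 2) * Γ := by nlinarith
  rw [mul_one_div, div_le_div_iff₀ (by positivity) (by positivity)]
  nlinarith [mul_le_mul_of_nonneg_left hηr hδ.le]

lemma gain_mul_le {c c'' η r Γ : ℝ} (hc'' : 0 ≤ c'') (hc''c : c'' ≤ c) (hc : c ≤ 1)
    (hη : 0 < η) (hΓ : 0 ≤ Γ) (hr : η * r ≤ 2 * Γ) :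
    c'' * η / (2 + (1 - c'') * η) * (r + (1 - c) * Γ) ≤ c'' * Γ := by
  have hD : 0 < 2 + (1 - c'') * η := by nlinarith
  rw [div_mul_eq_mul_div, div_le_iff₀ hD]
  have hB : η * (r + (1 - c) * Γ) ≤ Γ * (2 + (1 - c'') * η) := by
    nlinarith [mul_nonneg (mul_nonneg (sub_nonneg.2 hc''c) hη.le) hΓ]
  nlinarith [mul_le_mul_of_nonneg_left hB hc'']

/-- With `r = μ + λ`, `τ* = 1/(δΓ)`, `c'' = c·exp(−(1+η+ε²)/(δη))` and
`c̃ = c''η/(2+(1−c'')η)`, for `0 < λ ≤ ε²μ` and `Γ ≥ ημ`,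
`E[exp(−(1 − c·𝟙[τ ≥ τ*])·τ·Γ)] ≥ (1 + c̃)·r/(r+Γ)` for `τ ~ Exp(r)`. -/
theorem stmt_10 (ε η δ c μ lam Γ : ℝ)
    (hε : 0 < ε ∧ ε < 1) (hη : 0 < η ∧ η < 1) (hδ : 0 < δ ∧ δ < 1) (hc : 0 < c ∧ c < 1)
    (hμ : 0 < μ) (hlam0 : 0 < lam) (hlam : lam ≤ ε ^ 2 * μ) (hΓ : η * μ ≤ Γ)
    (r τstar c'' ctilde : ℝ)
    (hrdef : r = μ + lam)
    (hτdef : τstar = 1 / (δ * Γ))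
    (hc''def : c'' = c * Real.exp (-(1 + η + ε ^ 2) / (δ * η)))
    (hctdef : ctilde = c'' * η / (2 + (1 - c'') * η)) :
    (1 + ctilde) * (r / (r + Γ)) ≤
      ∫ t in Set.Ici (0 : ℝ),
        r * Real.exp (-r * t) *
          Real.exp (-(1 - c * (if τstar ≤ t then 1 else 0)) * t * Γ) := by
  have hΓ0 : 0 < Γ := (mul_pos hη.1 hμ).trans_le hΓ
  have hr0 : 0 < r := by rw [hrdef]; positivity
  have hτ0 : 0 ≤ τstar := by rw [hτdef]; exact one_div_nonneg.2 (mul_pos hδ.1 hΓ0).le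
  have hrμ : r ≤ (1 + ε ^ 2) * μ := by rw [hrdef]; linarith
  have hr2Γ : η * r ≤ 2 * Γ := by nlinarith [pow_lt_one₀ hε.1.le hε.2 two_ne_zero]
  have hB : 0 < r + (1 - c) * Γ := by nlinarith
  set X := exp (-(r + Γ) * τstar) with hXdef
  have hc''X : c'' ≤ c * X := by
    rw [hc''def, hXdef, hτdef, neg_mul, neg_div]
    gcongr ?_ * exp (-?_)
    · exact hc.1.le
    · exact add_mul_one_div_mul_le hη.1 hδ.1 hμ hrμ hΓ
  have hc''0 : 0 ≤ c'' := hc''def ▸ mul_nonneg hc.1.le (exp_pos _).le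
  have hc''c : c'' ≤ c :=
    hc''X.trans (mul_le_of_le_one_right hc.1.le (exp_le_one_iff.2 (by nlinarith)))
  have hintegrand : ∀ t,
      r * exp (-r * t) * exp (-(1 - c * (if τstar ≤ t then 1 else 0)) * t * Γ) =
        r * (if τstar ≤ t then exp (-(r + (1 - c) * Γ) * t) else exp (-(r + Γ) * t)) := by
    intro t
    split_ifs <;> rw [mul_assoc, ← exp_add] <;> ring_nf
  simp_rw [hintegrand]
  rw [integral_const_mul, integral_Ici_ite_exp_neg_mul (by positivity) hB hτ0]
  refine one_add_mul_div_le_of_rate_drop hr0.le hB (by nlinarith) ?_ ?_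
  · gcongr
    nlinarith
  · calc ctilde * (r + (1 - c) * Γ) ≤ c'' * Γ :=
          hctdef ▸ gain_mul_le hc''0 hc''c hc.2.le hη.1 hΓ0.le hr2Γ
      _ ≤ (r + Γ - (r + (1 - c) * Γ)) * X := by nlinarith
end

section
/- The function f(x) := x/(x + 1 − e^{−x}) is strictly increasing on (0, ∞), satisfies f(x) > 1/2 for every x > 0, and f(x) → 1/2 as x → 0 from the right. -/
/-!
Write `f x = 1 / (1 + g x)` with `g x = (1 - e^{-x}) / x`. Since `g x` is the slope of the secant
of the convex function `exp` between `-x` and `0`, `g` is strictly decreasing on `(0, ∞)` and tends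
to `exp' 0 = 1` as `x → 0⁺`; and `1 - e^{-x} < x` gives `g x < 1`. Hence `f` is strictly
increasing, exceeds `1 / (1 + 1)` and tends to it.
-/

open Real Filter Set Topology

lemma one_sub_exp_neg_pos {x : ℝ} (hx : 0 < x) : 0 < 1 - exp (-x) := by
  simpa using exp_lt_one_iff.mpr (neg_lt_zero.mpr hx)

lemma one_sub_exp_neg_lt_self {x : ℝ} (hx : 0 < x) : 1 - exp (-x) < x := by
  linarith [add_one_lt_exp (neg_ne_zero.mpr hx.ne')]

lemma exp_neg_sub_one_div_neg (x : ℝ) : (exp (-x) - 1) / -x = (1 - exp (-x)) / x := by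
  rw [← neg_div_neg_eq, neg_neg, neg_sub]

lemma strictAntiOn_one_sub_exp_neg_div :
    StrictAntiOn (fun x : ℝ => (1 - exp (-x)) / x) (Ioi 0) := by
  intro a ha b hb hab
  have := strictConvexOn_exp.secant_strict_mono (a := 0) (mem_univ _) (mem_univ _) (mem_univ _)
    (neg_ne_zero.mpr (ne_of_gt hb)) (neg_ne_zero.mpr (ne_of_gt ha)) (neg_lt_neg hab)
  simpa only [exp_zero, sub_zero, exp_neg_sub_one_div_neg] using this

lemma tendsto_one_sub_exp_neg_div_nhdsGT_zero :
    Tendsto (fun x : ℝ => (1 - exp (-x)) / x) (𝓝[>] 0) (𝓝 1) := by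
  have hderiv : HasDerivAt (fun t : ℝ => -exp (-t)) 1 0 := by
    simpa [Pi.neg_def] using ((hasDerivAt_neg (0 : ℝ)).exp).neg
  refine hderiv.tendsto_slope_zero_right.congr fun t => ?_
  simp [div_eq_inv_mul, sub_eq_neg_add, add_comm]

lemma div_add_one_sub_exp_neg_eq {x : ℝ} (hx : x ≠ 0) :
    x / (x + 1 - exp (-x)) = 1 / (1 + (1 - exp (-x)) / x) := by
  rw [one_add_div hx, one_div_div, add_sub_assoc]

/-- The function `f(x) = x/(x + 1 − e^{−x})` is strictly increasing on `(0, ∞)`,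
exceeds `1/2` for every `x > 0`, and tends to `1/2` as `x → 0⁺`. -/
theorem stmt_11 :
    StrictMonoOn (fun x : ℝ => x / (x + 1 - Real.exp (-x))) (Set.Ioi 0) ∧
    (∀ x : ℝ, 0 < x → 1 / 2 < x / (x + 1 - Real.exp (-x))) ∧
    Filter.Tendsto (fun x : ℝ => x / (x + 1 - Real.exp (-x)))
      (nhdsWithin 0 (Set.Ioi 0)) (nhds (1 / 2)) := by
  have hg_pos {x : ℝ} (hx : 0 < x) : 0 < 1 + (1 - exp (-x)) / x := by
    have := one_sub_exp_neg_pos hx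
    positivity
  refine ⟨fun a ha b hb hab => ?_, fun x hx => ?_, ?_⟩
  · simp only [div_add_one_sub_exp_neg_eq (ne_of_gt ha), div_add_one_sub_exp_neg_eq (ne_of_gt hb)]
    exact one_div_lt_one_div_of_lt (hg_pos hb)
      (add_lt_add_right (strictAntiOn_one_sub_exp_neg_div ha hb hab) 1)
  · rw [div_add_one_sub_exp_neg_eq hx.ne']
    have hg_lt_one : (1 - exp (-x)) / x < 1 := (div_lt_one hx).mpr (one_sub_exp_neg_lt_self hx)
    have := one_div_lt_one_div_of_lt (hg_pos hx) (add_lt_add_right hg_lt_one 1)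
    rwa [one_add_one_eq_two] at this
  · have hlim := (tendsto_one_sub_exp_neg_div_nhdsGT_zero.const_add 1).inv₀ (by norm_num)
    rw [one_add_one_eq_two, ← one_div] at hlim
    refine hlim.congr' ?_
    filter_upwards [self_mem_nhdsWithin] with x (hx : 0 < x)
    rw [div_add_one_sub_exp_neg_eq hx.ne', one_div]
end

section
/- Let ε ∈ (0, 0.1), let I be a finite set, let x : I → ℝ and r : I → ℝ satisfy x_i ≥ 0 and r_i ≥ 0 for all i ∈ I, and let γ > 0 with ∑_{i∈I} x_i ≤ (1 − ε)·γ. Then ∫₀^∞ (1 − exp(−(∑_{i∈I, r_i ≥ w} x_i)/γ)) dw ≥ (1 − 1/e + g(1 − ε)) · (∑_{i∈I} x_i r_i)/γ, where g(z) := (1 − e^{−z})/z − (1 − 1/e). -/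
/-!
The constant collapses to `c = (1 - e^{-(1-ε)}) / (1 - ε)`, the slope of the chord of the concave
function `1 - e^{-s}` over `[0, 1 - ε]`. The load `S(w) = ∑_{r_i ≥ w} x_i` never exceeds
`(1 - ε)γ`, so the integrand is at least `c · S(w) / γ` pointwise, and by the layer-cake identity
`∫₀^∞ S = ∑ x_i r_i`.
-/

open MeasureTheory Set Real

lemma one_sub_exp_neg_div_mul_le {a s : ℝ} (ha : 0 < a) (hs0 : 0 ≤ s) (hsa : s ≤ a) :
    (1 - exp (-a)) / a * s ≤ 1 - exp (-s) := by
  set t := s / a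
  have ht0 : 0 ≤ t := div_nonneg hs0 ha.le
  have ht1 : t ≤ 1 := (div_le_one ha).2 hsa
  have hconv : exp ((1 - t) • (0 : ℝ) + t • (-a)) ≤ (1 - t) • exp 0 + t • exp (-a) :=
    convexOn_exp.2 (mem_univ _) (mem_univ _) (by linarith) ht0 (by ring)
  have hpoint : (1 - t) • (0 : ℝ) + t • (-a) = -s := by
    simp only [smul_eq_mul, mul_zero, zero_add, t]
    field_simp
  rw [hpoint, smul_eq_mul, smul_eq_mul, exp_zero] at hconv
  calc (1 - exp (-a)) / a * s = t * (1 - exp (-a)) := by ring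
    _ ≤ 1 - exp (-s) := by linarith

lemma abs_one_sub_exp_neg_le {t : ℝ} (ht : 0 ≤ t) : |1 - exp (-t)| ≤ t := by
  rw [abs_of_nonneg (sub_nonneg.2 (exp_le_one_iff.2 (neg_nonpos.2 ht)))]
  linarith [add_one_le_exp (-t)]

lemma div_mul_integral_le_integral_one_sub_exp_neg {α : Type*} [MeasurableSpace α]
    {μ : Measure α} {S : α → ℝ} {a γ : ℝ} (ha : 0 < a) (hγ : 0 < γ)
    (hS : Integrable S μ) (hS0 : ∀ w, 0 ≤ S w) (hSle : ∀ w, S w ≤ a * γ) :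
    (1 - exp (-a)) / a * ((∫ w, S w ∂μ) / γ) ≤ ∫ w, (1 - exp (-S w / γ)) ∂μ := by
  have hratio : ∀ w, -S w / γ = -(S w / γ) := fun w => neg_div γ (S w)
  have hchord : ∀ w, (1 - exp (-a)) / a / γ * S w ≤ 1 - exp (-S w / γ) := fun w => by
    rw [hratio, div_mul_eq_mul_div, mul_div_assoc]
    exact one_sub_exp_neg_div_mul_le ha (div_nonneg (hS0 w) hγ.le)
      ((div_le_iff₀ hγ).2 (hSle w))
  have hint : Integrable (fun w => 1 - exp (-S w / γ)) μ := by
    refine (hS.div_const γ).mono' ?_ (Filter.Eventually.of_forall fun w => ?_)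
    · exact (by fun_prop : Continuous fun t => 1 - exp (-t / γ)).comp_aestronglyMeasurable
        hS.aestronglyMeasurable
    · rw [norm_eq_abs, hratio]
      exact abs_one_sub_exp_neg_le (div_nonneg (hS0 w) hγ.le)
  calc (1 - exp (-a)) / a * ((∫ w, S w ∂μ) / γ)
      = ∫ w, (1 - exp (-a)) / a / γ * S w ∂μ := by rw [integral_const_mul]; ring
    _ ≤ ∫ w, (1 - exp (-S w / γ)) ∂μ := integral_mono (hS.const_mul _) hint hchord

section LayerCake

lemma integrableOn_Ici_indicator_Iic_const (b c : ℝ) :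
    IntegrableOn ((Iic b).indicator fun _ => c) (Ici 0) := by
  rw [IntegrableOn, integrable_indicator_iff measurableSet_Iic, IntegrableOn,
    Measure.restrict_restrict measurableSet_Iic, Iic_inter_Ici]
  exact integrableOn_const measure_Icc_lt_top.ne

lemma setIntegral_Ici_indicator_Iic_const {b : ℝ} (hb : 0 ≤ b) (c : ℝ) :
    ∫ w in Ici 0, (Iic b).indicator (fun _ => c) w = c * b := by
  rw [setIntegral_indicator measurableSet_Iic, Ici_inter_Iic, setIntegral_const,
    Real.volume_real_Icc_of_le hb, smul_eq_mul, sub_zero, mul_comm]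

variable {I : Type*} [Fintype I] (x r : I → ℝ)

lemma sum_filter_le_eq_sum_indicator (w : ℝ) :
    ∑ i ∈ Finset.univ.filter (fun i => w ≤ r i), x i
      = ∑ i, (Iic (r i)).indicator (fun _ => x i) w := by
  simp [Finset.sum_filter, indicator_apply]

lemma integrableOn_Ici_sum_filter_le :
    IntegrableOn (fun w => ∑ i ∈ Finset.univ.filter (fun i => w ≤ r i), x i) (Ici 0) := by
  simp_rw [sum_filter_le_eq_sum_indicator]
  exact integrable_finsetSum _ fun i _ => integrableOn_Ici_indicator_Iic_const (r i) (x i)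

lemma setIntegral_Ici_sum_filter_le (hr : ∀ i, 0 ≤ r i) :
    ∫ w in Ici 0, ∑ i ∈ Finset.univ.filter (fun i => w ≤ r i), x i = ∑ i, x i * r i := by
  simp_rw [sum_filter_le_eq_sum_indicator]
  rw [integral_finsetSum _ fun i _ => integrableOn_Ici_indicator_Iic_const (r i) (x i)]
  exact Finset.sum_congr rfl fun i _ => setIntegral_Ici_indicator_Iic_const (hr i) (x i)

end LayerCake

open Classical in
theorem stmt_15_general (ε : ℝ) (hε1 : ε < 0.1) {I : Type*} [Fintype I]
    (x r : I → ℝ) (hx : ∀ i, 0 ≤ x i) (hr : ∀ i, 0 ≤ r i)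
    (γ : ℝ) (hγ : 0 < γ) (hsat : ∑ i, x i ≤ (1 - ε) * γ) :
    (1 - 1 / Real.exp 1 +
        ((1 - Real.exp (-(1 - ε))) / (1 - ε) - (1 - 1 / Real.exp 1))) *
      ((∑ i, x i * r i) / γ) ≤
    ∫ w in Set.Ici (0 : ℝ),
      (1 - Real.exp (-(∑ i ∈ Finset.univ.filter (fun i : I => w ≤ r i), x i) / γ)) := by
  have hε : 0 < 1 - ε := by norm_num at hε1 ⊢; linarith
  have hload : ∀ w, ∑ i ∈ Finset.univ.filter (fun i => w ≤ r i), x i ≤ (1 - ε) * γ := fun w =>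
    (Finset.sum_le_sum_of_subset_of_nonneg (Finset.filter_subset _ _) fun i _ _ => hx i).trans hsat
  rw [add_sub_cancel, ← setIntegral_Ici_sum_filter_le x r hr]
  exact div_mul_integral_le_integral_one_sub_exp_neg hε hγ (integrableOn_Ici_sum_filter_le x r)
    (fun w => Finset.sum_nonneg fun i _ => hx i) hload

open Classical in
/-- If `∑ x_i ≤ (1 − ε)γ`, then
`∫₀^∞ (1 − exp(−(∑_{i : r_i ≥ w} x_i)/γ)) dw ≥ (1 − 1/e + g(1 − ε)) · (∑ x_i r_i)/γ`,
where `g(z) = (1 − e^{−z})/z − (1 − 1/e)`. -/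
theorem stmt_15 (ε : ℝ) (hε0 : 0 < ε) (hε1 : ε < 0.1) {I : Type*} [Fintype I]
    (x r : I → ℝ) (hx : ∀ i, 0 ≤ x i) (hr : ∀ i, 0 ≤ r i)
    (γ : ℝ) (hγ : 0 < γ) (hsat : ∑ i, x i ≤ (1 - ε) * γ) :
    (1 - 1 / Real.exp 1 +
        ((1 - Real.exp (-(1 - ε))) / (1 - ε) - (1 - 1 / Real.exp 1))) *
      ((∑ i, x i * r i) / γ) ≤
    ∫ w in Set.Ici (0 : ℝ),
      (1 - Real.exp (-(∑ i ∈ Finset.univ.filter (fun i : I => w ≤ r i), x i) / γ)) :=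
  stmt_15_general ε hε1 x r hx hr γ hγ hsat
end

section
/- For every ε ∈ (0, 0.1), every s ∈ [0, 1], and every s₁ with (ε/2)·s ≤ s₁ ≤ s: 1 − exp(−s₁/(2 − 1/e) − (s − s₁)/2) ≥ (1 − exp(−(1/2 + (1/(2 − 1/e) − 1/2)·ε/2))) · s. -/
/-! The map `s ↦ 1 - exp (-k s)` is concave and vanishes at `0`, so on `[0, 1]` it lies above
its chord `(1 - exp (-k)) s`. With `k = 1/2 + (1/(2 - 1/e) - 1/2) ε/2`, the exponent
`s₁/(2 - 1/e) + (s - s₁)/2` is at least `k s`, because `s₁ ≥ (ε/2) s` and the rate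
`1/(2 - 1/e)` paid on `s₁` is at least the rate `1/2` paid on `s - s₁`. -/

open Real

lemma mul_one_sub_exp_neg_le (k : ℝ) {s : ℝ} (hs0 : 0 ≤ s) (hs1 : s ≤ 1) :
    (1 - exp (-k)) * s ≤ 1 - exp (-(k * s)) := by
  have hchord := convexOn_exp.2 (Set.mem_univ 0) (Set.mem_univ (-k))
    (sub_nonneg.2 hs1) hs0 (sub_add_cancel 1 s)
  simp only [smul_eq_mul, mul_zero, zero_add, exp_zero, mul_one, mul_neg, mul_comm s k] at hchord
  linarith

lemma half_le_one_div_two_sub_one_div_exp_one : (1 : ℝ) / 2 ≤ 1 / (2 - 1 / exp 1) := by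
  have hinv_pos : 0 < 1 / exp 1 := by positivity
  have hinv_lt_one : 1 / exp 1 < 1 := by
    rw [div_lt_one (exp_pos 1)]
    exact one_lt_exp_iff.2 one_pos
  exact one_div_le_one_div_of_le (by linarith) (by linarith)

lemma interpolated_rate_mul_le {a c t s s₁ : ℝ} (hac : a ≤ c) (hs₁ : t * s ≤ s₁) :
    (a + (c - a) * t) * s ≤ c * s₁ + a * (s - s₁) := by
  nlinarith [mul_le_mul_of_nonneg_left hs₁ (sub_nonneg.2 hac)]

theorem stmt_18_general (ε s s₁ : ℝ)
    (hs0 : 0 ≤ s) (hs1 : s ≤ 1)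
    (hs₁l : (ε / 2) * s ≤ s₁) :
    (1 - Real.exp (-(1 / 2 + (1 / (2 - 1 / Real.exp 1) - 1 / 2) * (ε / 2)))) * s ≤
      1 - Real.exp (-(s₁ / (2 - 1 / Real.exp 1)) - (s - s₁) / 2) := by
  have hexponent := interpolated_rate_mul_le half_le_one_div_two_sub_one_div_exp_one hs₁l
  calc _ ≤ 1 - exp (-((1 / 2 + (1 / (2 - 1 / exp 1) - 1 / 2) * (ε / 2)) * s)) :=
        mul_one_sub_exp_neg_le _ hs0 hs1
    _ ≤ _ := by
        gcongr
        rw [div_eq_mul_one_div s₁]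
        linarith

/-- Sharpened concavity step for abundant types: for `ε ∈ (0, 0.1)`, `s ∈ [0, 1]` and
`(ε/2)s ≤ s₁ ≤ s`,
`1 − exp(−s₁/(2 − 1/e) − (s − s₁)/2) ≥ (1 − exp(−(1/2 + (1/(2 − 1/e) − 1/2)·ε/2)))·s`. -/
theorem stmt_18 (ε s s₁ : ℝ) (hε0 : 0 < ε) (hε1 : ε < 0.1)
    (hs0 : 0 ≤ s) (hs1 : s ≤ 1)
    (hs₁l : (ε / 2) * s ≤ s₁) (hs₁u : s₁ ≤ s) :
    (1 - Real.exp (-(1 / 2 + (1 / (2 - 1 / Real.exp 1) - 1 / 2) * (ε / 2)))) * s ≤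
      1 - Real.exp (-(s₁ / (2 - 1 / Real.exp 1)) - (s - s₁) / 2) :=
  stmt_18_general ε s s₁ hs0 hs1 hs₁l
end
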